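/- If X, Y, Z are independent Exp(1) random variables and δ ∈ ℝ, then the random variable D = min{δ + Y, X + Z} − min{X, δ + Y + Z} has probability density d ↦ K(δ,d) where K(δ,d) = e^{−|d|} if (d < 0 and δ ≤ d) or (d > 0 and δ > d), K(δ,d) = e^{−|d|} e^{−(δ−d)} if d < 0 and δ > d, and K(δ,d) = e^{−|d|} e^{−(d−δ)} if d > 0 and δ ≤ d. -/

import Mathlib

open Real MeasureTheory ProbabilityTheory

/-- The density of `min{δ+Y, X+Z} − min{X, δ+Y+Z}` (value at `d = 0` is irrelevant a.e.). -/
noncomputable def Kden (δ d : ℝ) : ℝ :=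
  if d < 0 then (if δ ≤ d then exp (-|d|) else exp (-|d|) * exp (-(δ - d)))
  else if 0 < d then (if δ ≤ d then exp (-|d|) * exp (-(d - δ)) else exp (-|d|))
  else exp (-|δ|)

/-!
With `W = δ + Y - X` one has `D = min W Z - min 0 (W + Z)`, which is `min W Z` for `W ≥ 0` and
`max W (-Z)` for `W < 0`. As `W` and `Z` are independent, `P(D ≥ t) = P(W ≥ t) P(Z ≥ t)` for
`t > 0` and `P(D < t) = P(W < t) P(Z > -t)` for `t ≤ 0`, where `W - δ = Y - X` is standard Laplace.
Integrating out `X` gives the Laplace tail `P(Y - X ≥ s) = ∫_0^∞ e^{-x} min(1, e^{-(x+s)}) dx`, and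
the substitutions `d = t + x`, `d = t - x` reduce the tail integrals of `K(δ, ·)` to the same
integral.
-/

open Set

/-- `P(L ≥ s)` for a standard Laplace variable `L`. -/
noncomputable def laplaceTail (s : ℝ) : ℝ :=
  if 0 ≤ s then exp (-s) / 2 else 1 - exp s / 2

lemma laplaceTail_nonneg (s : ℝ) : 0 ≤ laplaceTail s := by
  unfold laplaceTail
  split_ifs with hs
  · positivity
  · linarith [exp_le_one_iff.2 (not_le.1 hs).le]

lemma laplaceTail_add_laplaceTail_neg (s : ℝ) : laplaceTail s + laplaceTail (-s) = 1 := by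
  rcases lt_trichotomy s 0 with hs | rfl | hs
  · simp [laplaceTail, hs.not_ge, hs.le]
  · norm_num [laplaceTail]
  · simp [laplaceTail, hs.le, hs.not_ge]

section Translation

variable {E : Type*} [NormedAddCommGroup E] [NormedSpace ℝ E]

lemma setIntegral_Ioi_eq_integral_comp_add (f : ℝ → E) (t : ℝ) :
    ∫ d in Ioi t, f d = ∫ x in Ioi 0, f (x + t) := by
  rw [← (measurePreserving_add_right volume t).setIntegral_preimage_emb
    (measurableEmbedding_addRight t), preimage_add_const_Ioi, sub_self]

lemma setIntegral_Iio_eq_integral_comp_sub (f : ℝ → E) (t : ℝ) :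
    ∫ d in Iio t, f d = ∫ x in Ioi 0, f (t - x) := by
  rw [← (Measure.measurePreserving_sub_left volume t).setIntegral_preimage_emb
    (measurableEmbedding_subLeft t), preimage_const_sub_Iio, sub_self]

end Translation

lemma integrableOn_exp_neg_mul_min_one (s : ℝ) :
    IntegrableOn (fun x => exp (-x) * min 1 (exp (-(x + s)))) (Ioi 0) := by
  refine (integrableOn_exp_neg_Ioi 0).mono' (by fun_prop) (ae_of_all _ fun x => ?_)
  rw [norm_of_nonneg (by positivity)]
  exact mul_le_of_le_one_right (exp_pos _).le (min_le_left _ _)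

lemma integral_exp_neg_mul_min_one (s : ℝ) :
    ∫ x in Ioi 0, exp (-x) * min 1 (exp (-(x + s))) = laplaceTail s := by
  have h_tail {a : ℝ} (ha : -s ≤ a) :
      ∫ x in Ioi a, exp (-x) * min 1 (exp (-(x + s))) = exp (-s - 2 * a) / 2 := by
    have h_eq : EqOn (fun x => exp (-x) * min 1 (exp (-(x + s))))
        (fun x => exp (-s) * exp (-2 * x)) (Ioi a) := fun x hx => by
      dsimp only
      rw [min_eq_right (exp_le_one_iff.2 (by linarith [mem_Ioi.1 hx])), ← exp_add, ← exp_add]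
      ring_nf
    rw [setIntegral_congr_fun measurableSet_Ioi h_eq, integral_const_mul,
      integral_exp_mul_Ioi (by norm_num), neg_div_neg_eq, mul_div_assoc', ← exp_add]
    ring_nf
  rcases le_or_gt 0 s with hs | hs
  · rw [h_tail (by linarith), laplaceTail, if_pos hs, mul_zero, sub_zero]
  have h_head : ∫ x in Ioc 0 (-s), exp (-x) * min 1 (exp (-(x + s))) = 1 - exp s := by
    have h_eq : EqOn (fun x => exp (-x) * min 1 (exp (-(x + s)))) (fun x => exp (-x))
        (Ioc 0 (-s)) := fun x hx => by
      dsimp only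
      rw [min_eq_left (one_le_exp (by linarith [hx.2])), mul_one]
    rw [setIntegral_congr_fun measurableSet_Ioc h_eq,
      ← intervalIntegral.integral_of_le (by linarith),
      intervalIntegral.integral_comp_neg (fun x => exp x), integral_exp, neg_neg, neg_zero,
      exp_zero]
  have h_int := integrableOn_exp_neg_mul_min_one s
  rw [← Ioc_union_Ioi_eq_Ioi (neg_nonneg.2 hs.le),
    setIntegral_union Ioc_disjoint_Ioi_same measurableSet_Ioi
      (h_int.mono_set Ioc_subset_Ioi_self) (h_int.mono_set (Ioi_subset_Ioi (by linarith))),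
    h_head, h_tail le_rfl, laplaceTail, if_neg hs.not_ge]
  ring_nf

lemma Kden_of_pos {δ d : ℝ} (hd : 0 < d) : Kden δ d = exp (-d) * min 1 (exp (δ - d)) := by
  rw [Kden, if_neg hd.not_gt, if_pos hd, abs_of_pos hd]
  split_ifs with h
  · rw [min_eq_right (exp_le_one_iff.2 (by linarith)), neg_sub]
  · rw [min_eq_left (one_le_exp (by linarith)), mul_one]

lemma Kden_of_neg {δ d : ℝ} (hd : d < 0) : Kden δ d = exp d * min 1 (exp (d - δ)) := by
  rw [Kden, if_pos hd, abs_of_neg hd, neg_neg]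
  split_ifs with h
  · rw [min_eq_left (one_le_exp (by linarith)), mul_one]
  · rw [min_eq_right (exp_le_one_iff.2 (by linarith)), neg_sub]

lemma Kden_nonneg (δ d : ℝ) : 0 ≤ Kden δ d := by
  unfold Kden; split_ifs <;> positivity

lemma Kden_le_exp_neg_abs (δ d : ℝ) : Kden δ d ≤ exp (-|d|) := by
  rcases lt_trichotomy d 0 with hd | rfl | hd
  · rw [Kden_of_neg hd, abs_of_neg hd, neg_neg]
    exact mul_le_of_le_one_right (exp_pos _).le (min_le_left _ _)
  · simp [Kden]
  · rw [Kden_of_pos hd, abs_of_pos hd]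
    exact mul_le_of_le_one_right (exp_pos _).le (min_le_left _ _)

lemma measurable_Kden (δ : ℝ) : Measurable (Kden δ) := by
  unfold Kden
  refine Measurable.ite measurableSet_Iio (Measurable.ite measurableSet_Ici ?_ ?_)
    (Measurable.ite measurableSet_Ioi (Measurable.ite measurableSet_Ici ?_ ?_) ?_) <;> fun_prop

lemma integrable_Kden (δ : ℝ) : Integrable (Kden δ) := by
  have h_abs : Integrable fun d : ℝ => exp (-|d|) := by
    rw [← integrableOn_univ, ← Iic_union_Ioi (a := 0)]
    refine IntegrableOn.union ?_ ?_
    · exact (integrableOn_exp_Iic 0).congr_fun (fun d hd => by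
        rw [abs_of_nonpos hd, neg_neg]) measurableSet_Iic
    · exact (integrableOn_exp_neg_Ioi 0).congr_fun (fun d hd => by
        rw [abs_of_pos hd]) measurableSet_Ioi
  refine h_abs.mono' (measurable_Kden δ).aestronglyMeasurable (ae_of_all _ fun d => ?_)
  rw [norm_of_nonneg (Kden_nonneg δ d)]
  exact Kden_le_exp_neg_abs δ d

lemma integral_Kden_Ioi (δ : ℝ) {t : ℝ} (ht : 0 ≤ t) :
    ∫ d in Ioi t, Kden δ d = exp (-t) * laplaceTail (t - δ) := by
  have h_eq : EqOn (fun x => Kden δ (x + t))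
      (fun x => exp (-t) * (exp (-x) * min 1 (exp (-(x + (t - δ)))))) (Ioi 0) := fun x hx => by
    dsimp only
    rw [Kden_of_pos (by linarith [mem_Ioi.1 hx]), ← mul_assoc, ← exp_add]
    ring_nf
  rw [setIntegral_Ioi_eq_integral_comp_add, setIntegral_congr_fun measurableSet_Ioi h_eq,
    integral_const_mul, integral_exp_neg_mul_min_one]

lemma integral_Kden_Iio (δ : ℝ) {t : ℝ} (ht : t ≤ 0) :
    ∫ d in Iio t, Kden δ d = exp t * laplaceTail (δ - t) := by
  have h_eq : EqOn (fun x => Kden δ (t - x))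
      (fun x => exp t * (exp (-x) * min 1 (exp (-(x + (δ - t)))))) (Ioi 0) := fun x hx => by
    dsimp only
    rw [Kden_of_neg (by linarith [mem_Ioi.1 hx]), ← mul_assoc, ← exp_add]
    ring_nf
  rw [setIntegral_Iio_eq_integral_comp_sub, setIntegral_congr_fun measurableSet_Ioi h_eq,
    integral_const_mul, integral_exp_neg_mul_min_one]

lemma integral_Kden (δ : ℝ) : ∫ d, Kden δ d = 1 := by
  rw [← integral_add_compl measurableSet_Iio (integrable_Kden δ), compl_Iio,
    integral_Ici_eq_integral_Ioi, integral_Kden_Iio δ le_rfl, integral_Kden_Ioi δ le_rfl,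
    neg_zero, exp_zero, one_mul, one_mul, zero_sub, sub_zero, laplaceTail_add_laplaceTail_neg]

lemma withDensity_Kden_apply (δ : ℝ) {s : Set ℝ} (hs : MeasurableSet s) :
    volume.withDensity (fun d => ENNReal.ofReal (Kden δ d)) s =
      ENNReal.ofReal (∫ d in s, Kden δ d) := by
  rw [withDensity_apply _ hs, ofReal_integral_eq_lintegral_ofReal (integrable_Kden δ).integrableOn
    (ae_of_all _ (Kden_nonneg δ))]

instance isProbabilityMeasure_withDensity_Kden (δ : ℝ) :
    IsProbabilityMeasure (volume.withDensity fun d => ENNReal.ofReal (Kden δ d)) :=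
  ⟨by rw [withDensity_Kden_apply δ MeasurableSet.univ, setIntegral_univ, integral_Kden,
    ENNReal.ofReal_one]⟩

instance nullSingletonClass_expMeasure (r : ℝ) : NullSingletonClass (expMeasure r) :=
  nullSingletonClass_withDensity _

lemma expMeasure_Ioi {r : ℝ} (hr : 0 < r) (u : ℝ) :
    expMeasure r (Ioi u) = ENNReal.ofReal (min 1 (exp (-(r * u)))) := by
  have := isProbabilityMeasure_expMeasure hr
  rw [← compl_Iic, prob_compl_eq_one_sub measurableSet_Iic, ← ofReal_cdf, cdf_expMeasure_eq hr]
  split_ifs with hu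
  · have h_le : exp (-(r * u)) ≤ 1 := exp_le_one_iff.2 (neg_nonpos.2 (mul_nonneg hr.le hu))
    rw [min_eq_right h_le, ← ENNReal.ofReal_one, ← ENNReal.ofReal_sub _ (sub_nonneg.2 h_le),
      sub_sub_cancel]
  · rw [min_eq_left (one_le_exp (by nlinarith)), ENNReal.ofReal_zero, tsub_zero,
      ENNReal.ofReal_one]

lemma expMeasure_Ici {r : ℝ} (hr : 0 < r) (u : ℝ) :
    expMeasure r (Ici u) = ENNReal.ofReal (min 1 (exp (-(r * u)))) := by
  rw [← measure_congr Ioi_ae_eq_Ici, expMeasure_Ioi hr]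

lemma ae_nonneg_expMeasure {r : ℝ} (hr : 0 < r) : ∀ᵐ x ∂expMeasure r, 0 ≤ x := by
  have := isProbabilityMeasure_expMeasure hr
  change expMeasure r (Ici 0)ᶜ = 0
  rw [prob_compl_eq_one_sub measurableSet_Ici, expMeasure_Ici hr]
  simp

lemma lintegral_expMeasure (r : ℝ) {f : ℝ → ENNReal} (hf : Measurable f) :
    ∫⁻ x, f x ∂expMeasure r = ∫⁻ x in Ioi 0, ENNReal.ofReal (r * exp (-(r * x))) * f x := by
  have h_pdf : exponentialPDF r * f =
      (Ici 0).indicator fun x => ENNReal.ofReal (r * exp (-(r * x))) * f x := by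
    ext x
    by_cases hx : 0 ≤ x
    · simp [exponentialPDF_of_nonneg hx, hx]
    · simp [exponentialPDF_of_neg (not_le.1 hx), hx]
  change ∫⁻ x, f x ∂volume.withDensity (exponentialPDF r) = _
  rw [lintegral_withDensity_eq_lintegral_mul _ (f := exponentialPDF r)
      (measurable_exponentialPDFReal r).ennreal_ofReal hf, h_pdf,
    lintegral_indicator measurableSet_Ici, setLIntegral_congr Ioi_ae_eq_Ici.symm]

lemma measure_le_sub_of_indepFun {Ω : Type*} [MeasurableSpace Ω] {μ : Measure Ω}
    [IsFiniteMeasure μ] {X Y : Ω → ℝ} (hX : Measurable X) (hY : Measurable Y) (hXY : IndepFun X Y μ)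
    (hXe : μ.map X = expMeasure 1) (hYe : μ.map Y = expMeasure 1) (s : ℝ) :
    μ {ω | s ≤ Y ω - X ω} = ENNReal.ofReal (laplaceTail s) := by
  have := isProbabilityMeasure_expMeasure one_pos
  have h_map : μ.map (fun ω => (X ω, Y ω)) = (expMeasure 1).prod (expMeasure 1) := by
    rw [(indepFun_iff_map_prod_eq_prod_map_map hX.aemeasurable hY.aemeasurable).mp hXY, hXe, hYe]
  have hS : MeasurableSet {p : ℝ × ℝ | s ≤ p.2 - p.1} :=
    measurableSet_le (by fun_prop) (by fun_prop)
  have h_slice (x : ℝ) : Prod.mk x ⁻¹' {p : ℝ × ℝ | s ≤ p.2 - p.1} = Ici (x + s) := by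
    ext y; simp [add_comm x s, le_sub_iff_add_le]
  calc μ {ω | s ≤ Y ω - X ω} = (μ.map fun ω => (X ω, Y ω)) {p : ℝ × ℝ | s ≤ p.2 - p.1} := by
        rw [Measure.map_apply (by fun_prop) hS]; rfl
    _ = ∫⁻ x, ENNReal.ofReal (min 1 (exp (-(x + s)))) ∂expMeasure 1 := by
        simp_rw [h_map, Measure.prod_apply hS, h_slice, expMeasure_Ici one_pos, one_mul]
    _ = ∫⁻ x in Ioi 0, ENNReal.ofReal (exp (-x) * min 1 (exp (-(x + s)))) := by
        rw [lintegral_expMeasure 1 (f := fun x => ENNReal.ofReal (min 1 (exp (-(x + s)))))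
          (by fun_prop)]
        simp_rw [one_mul, ENNReal.ofReal_mul (exp_pos _).le]
    _ = ENNReal.ofReal (laplaceTail s) := by
        rw [← ofReal_integral_eq_lintegral_ofReal (integrableOn_exp_neg_mul_min_one s)
          (ae_of_all _ fun x => by positivity), integral_exp_neg_mul_min_one]

lemma min_sub_min_eq (δ x y z : ℝ) :
    min (δ + y) (x + z) - min x (δ + y + z) = min (δ + y - x) z - min 0 (δ + y - x + z) := by
  simp only [min_def]
  split_ifs <;> linarith

lemma le_min_sub_min_zero_iff {w z t : ℝ} (hz : 0 ≤ z) (ht : 0 < t) :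
    t ≤ min w z - min 0 (w + z) ↔ t ≤ w ∧ t ≤ z := by
  rcases min_cases w z with h | h <;> rcases min_cases 0 (w + z) with h' | h' <;>
    constructor <;> intros <;> (try constructor) <;> linarith

lemma min_sub_min_zero_lt_iff {w z t : ℝ} (hz : 0 ≤ z) (ht : t ≤ 0) :
    min w z - min 0 (w + z) < t ↔ w < t ∧ -t < z := by
  rcases min_cases w z with h | h <;> rcases min_cases 0 (w + z) with h' | h' <;>
    constructor <;> intros <;> (try constructor) <;> linarith

section MinSubMin

variable {Ω : Type*} [MeasurableSpace Ω] {μ : Measure Ω} {W Z : Ω → ℝ}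

lemma ProbabilityTheory.IndepFun.measure_le_min_sub_min_zero (hWZ : IndepFun W Z μ)
    (hZ : ∀ᵐ ω ∂μ, 0 ≤ Z ω) {t : ℝ} (ht : 0 < t) :
    μ ((fun ω => min (W ω) (Z ω) - min 0 (W ω + Z ω)) ⁻¹' Ici t) =
      μ (W ⁻¹' Ici t) * μ (Z ⁻¹' Ici t) := by
  refine (measure_congr ?_).trans
    (hWZ.measure_inter_preimage_eq_mul _ _ measurableSet_Ici measurableSet_Ici)
  filter_upwards [hZ] with ω hω
  exact propext (le_min_sub_min_zero_iff hω ht)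

lemma ProbabilityTheory.IndepFun.measure_min_sub_min_zero_lt (hWZ : IndepFun W Z μ)
    (hZ : ∀ᵐ ω ∂μ, 0 ≤ Z ω) {t : ℝ} (ht : t ≤ 0) :
    μ ((fun ω => min (W ω) (Z ω) - min 0 (W ω + Z ω)) ⁻¹' Iio t) =
      μ (W ⁻¹' Iio t) * μ (Z ⁻¹' Ioi (-t)) := by
  refine (measure_congr ?_).trans
    (hWZ.measure_inter_preimage_eq_mul _ _ measurableSet_Iio measurableSet_Ioi)
  filter_upwards [hZ] with ω hω
  exact propext (min_sub_min_zero_lt_iff hω ht)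

theorem map_min_sub_min_zero_eq_withDensity_Kden [IsProbabilityMeasure μ] (hW : Measurable W)
    (hZ : Measurable Z) (hWZ : IndepFun W Z μ) (hZe : μ.map Z = expMeasure 1) {δ : ℝ}
    (hW_tail : ∀ t, μ (W ⁻¹' Ici t) = ENNReal.ofReal (laplaceTail (t - δ))) :
    μ.map (fun ω => min (W ω) (Z ω) - min 0 (W ω + Z ω)) =
      volume.withDensity fun d => ENNReal.ofReal (Kden δ d) := by
  have hZ_law (s : Set ℝ) (hs : MeasurableSet s) : μ (Z ⁻¹' s) = expMeasure 1 s := by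
    rw [← Measure.map_apply hZ hs, hZe]
  have hZ_nonneg : ∀ᵐ ω ∂μ, 0 ≤ Z ω :=
    ae_of_ae_map hZ.aemeasurable (hZe ▸ ae_nonneg_expMeasure one_pos)
  have hW_Iio (t : ℝ) : μ (W ⁻¹' Iio t) = ENNReal.ofReal (laplaceTail (δ - t)) := by
    rw [← compl_Ici, preimage_compl, prob_compl_eq_one_sub (hW measurableSet_Ici), hW_tail,
      ← ENNReal.ofReal_one, ← ENNReal.ofReal_sub _ (laplaceTail_nonneg _),
      ← laplaceTail_add_laplaceTail_neg (t - δ), add_sub_cancel_left, neg_sub]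
  have hD : Measurable fun ω => min (W ω) (Z ω) - min 0 (W ω + Z ω) := by fun_prop
  have := Measure.isProbabilityMeasure_map (μ := μ) hD.aemeasurable
  refine Measure.ext_of_Ici _ _ fun t => ?_
  rcases lt_or_ge 0 t with ht | ht
  · rw [Measure.map_apply hD measurableSet_Ici, hWZ.measure_le_min_sub_min_zero hZ_nonneg ht,
      withDensity_Kden_apply δ measurableSet_Ici, integral_Ici_eq_integral_Ioi,
      integral_Kden_Ioi δ ht.le, hZ_law _ measurableSet_Ici, expMeasure_Ici one_pos, hW_tail,
      one_mul, min_eq_right (exp_le_one_iff.2 (by linarith)), mul_comm,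
      ENNReal.ofReal_mul (exp_pos _).le]
  · rw [← compl_Iio, prob_compl_eq_one_sub measurableSet_Iio,
      prob_compl_eq_one_sub measurableSet_Iio, Measure.map_apply hD measurableSet_Iio,
      hWZ.measure_min_sub_min_zero_lt hZ_nonneg ht, withDensity_Kden_apply δ measurableSet_Iio,
      integral_Kden_Iio δ ht, hZ_law _ measurableSet_Ioi, expMeasure_Ioi one_pos, hW_Iio,
      one_mul, neg_neg, min_eq_right (exp_le_one_iff.2 ht), mul_comm,
      ENNReal.ofReal_mul (exp_pos _).le]

end MinSubMin

theorem density_of_diff_min {Ω : Type*} [MeasurableSpace Ω] (μ : Measure Ω)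
    [IsProbabilityMeasure μ] (X Y Z : Ω → ℝ)
    (hX : Measurable X) (hY : Measurable Y) (hZ : Measurable Z)
    (hindep : iIndepFun ![X, Y, Z] μ)
    (hXe : Measure.map X μ = expMeasure 1)
    (hYe : Measure.map Y μ = expMeasure 1)
    (hZe : Measure.map Z μ = expMeasure 1) (δ : ℝ) :
    Measure.map (fun ω => min (δ + Y ω) (X ω + Z ω) - min (X ω) (δ + Y ω + Z ω)) μ =
      volume.withDensity fun d => ENNReal.ofReal (Kden δ d) := by
  set W : Ω → ℝ := fun ω => δ + Y ω - X ω
  have h_meas : ∀ i, Measurable (![X, Y, Z] i) := by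
    intro i; fin_cases i <;> assumption
  have hWZ : IndepFun W Z μ := (hindep.indepFun_prodMk h_meas 0 1 2 (by decide) (by decide)).comp
    (φ := fun p : ℝ × ℝ => δ + p.2 - p.1) (ψ := id) (by fun_prop) measurable_id
  have hW_tail (t : ℝ) : μ (W ⁻¹' Ici t) = ENNReal.ofReal (laplaceTail (t - δ)) := by
    rw [← measure_le_sub_of_indepFun hX hY (hindep.indepFun (i := 0) (j := 1) (by decide))
      hXe hYe]
    congr 1; ext ω
    simp only [W, mem_preimage, mem_Ici, mem_ofPred_eq]
    constructor <;> intro <;> linarith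
  have h_eq : (fun ω => min (δ + Y ω) (X ω + Z ω) - min (X ω) (δ + Y ω + Z ω)) =
      fun ω => min (W ω) (Z ω) - min 0 (W ω + Z ω) :=
    funext fun ω => min_sub_min_eq δ (X ω) (Y ω) (Z ω)
  rw [h_eq]
  exact map_min_sub_min_zero_eq_withDensity_Kden (by fun_prop) hZ hWZ hZe hW_tail
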